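/- For the metric g = 2·(y·log y)/(x·log x)·dx² - (dx⊗dy + dy⊗dx) on M = {(x,y) : x³ < y < x², 0 < x < 1/2}, the curve Σ(s) = (s, s² - s³) for s ∈ (0,1/2) is spacelike: g(Σ'(s), Σ'(s)) = 2s² + 2s(1-s)·log(1-s)/log(s) > 0 for all s ∈ (0, 1/2). -/

import Mathlib

open Matrix

noncomputable section

/-- The metric of Example 3.6 as a matrix in the coordinates `(x,y)`. -/
def gEx (x y : ℝ) : Matrix (Fin 2) (Fin 2) ℝ :=
  !![2 * (y * Real.log y) / (x * Real.log x), -1; -1, 0]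

lemma gEx_dotProduct_mulVec (x y a b : ℝ) :
    ![a, b] ⬝ᵥ (gEx x y).mulVec ![a, b] =
      2 * (y * Real.log y) / (x * Real.log x) * a ^ 2 - 2 * a * b := by
  simp only [gEx, mulVec, dotProduct, Fin.sum_univ_two, of_apply, cons_val', cons_val_zero,
    cons_val_one, empty_val', cons_val_fin_one]
  ring

lemma Real.log_sq_sub_cube {s : ℝ} (h₀ : s ≠ 0) (h₁ : s ≠ 1) :
    Real.log (s ^ 2 - s ^ 3) = 2 * Real.log s + Real.log (1 - s) := by
  rw [show s ^ 2 - s ^ 3 = s ^ 2 * (1 - s) by ring,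
    Real.log_mul (pow_ne_zero 2 h₀) (sub_ne_zero.2 h₁.symm), Real.log_pow]
  norm_num

lemma sq_add_mul_log_one_sub_div_log_pos {s : ℝ} (h₀ : 0 < s) (h₁ : s < 1) :
    0 < 2 * s ^ 2 + 2 * s * (1 - s) * Real.log (1 - s) / Real.log s := by
  have hlog : 0 < 2 * s * (1 - s) * Real.log (1 - s) / Real.log s :=
    div_pos_of_neg_of_neg
      (mul_neg_of_pos_of_neg (by nlinarith) (Real.log_neg (by linarith) (by linarith)))
      (Real.log_neg h₀ h₁)
  positivity

/-- Example 3.6: the curve `Σ(s) = (s, s² - s³)` is spacelike. -/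
theorem stmt8 :
    ∀ s : ℝ, 0 < s → s < 1/2 →
      (![1, 2*s - 3*s^2] ⬝ᵥ (gEx s (s^2 - s^3)).mulVec ![1, 2*s - 3*s^2])
        = 2*s^2 + 2*s*(1-s) * Real.log (1-s) / Real.log s ∧
      0 < 2*s^2 + 2*s*(1-s) * Real.log (1-s) / Real.log s := by
  intro s h₀ hhalf
  have h₁ : s < 1 := by linarith
  refine ⟨?_, sq_add_mul_log_one_sub_div_log_pos h₀ h₁⟩
  have hlog : Real.log s ≠ 0 := (Real.log_neg h₀ h₁).ne
  rw [gEx_dotProduct_mulVec, Real.log_sq_sub_cube h₀.ne' h₁.ne]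
  field_simp
  ring
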